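/- Assume G ≅ C_{n1} ⊕ … ⊕ C_{nr} with 1 < n1 | … | nr and D(G) ≥ 4. Let d ∈ Δ1(G) with d ≥ max{⌊nr/2⌋, ⌊(r+1)/2⌋}. If d ≥ nr − 1, then ρ*(G, d) = K(G, d). -/

import Mathlib

/- Common definitions: zero-sum sequences over a finite abelian group,
   sets of lengths, the system of sets of lengths, the Davenport constant,
   sets of distances, elasticities, AAPs, Δ₁(G), ρ(G,d,k), ρ(G,d), ρ*(G,d),
   cross numbers, K(G₀), K(G,d), LCN-sets, Δ*(G). -/

open scoped Classical

section Defs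

variable {G : Type*} [AddCommGroup G]

/-- The support of a sequence (multiset) over `G`. -/
def suppSet (A : Multiset G) : Set G := {g | g ∈ A}

/-- `A` is a minimal zero-sum sequence (an atom of `𝓑(G₀)`) over `G₀ ⊆ G`:
a nontrivial zero-sum sequence with terms in `G₀` such that every proper
nontrivial subsequence has nonzero sum. -/
def IsMinZeroSum (G0 : Set G) (A : Multiset G) : Prop :=
  A ≠ 0 ∧ (∀ g ∈ A, g ∈ G0) ∧ A.sum = 0 ∧
    ∀ T : Multiset G, T ≤ A → T.sum = 0 → T = 0 ∨ T = A

/-- `B` is a zero-sum sequence over `G₀ ⊆ G` (an element of `𝓑(G₀)`). -/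
def IsZeroSumSeq (G0 : Set G) (B : Multiset G) : Prop :=
  (∀ g ∈ B, g ∈ G0) ∧ B.sum = 0

/-- The set of lengths `L(B)` of a zero-sum sequence `B` over `G₀`:
all `k` such that `B` is a product of `k` atoms of `𝓑(G₀)`.
(For the trivial sequence this is `{0}`.) -/
def lengthSet (G0 : Set G) (B : Multiset G) : Set ℕ :=
  {k | ∃ U : Fin k → Multiset G, (∀ i, IsMinZeroSum G0 (U i)) ∧ B = ∑ i, U i}

/-- The system of sets of lengths `𝓛(G₀)`. -/
def systemL (G0 : Set G) : Set (Set ℕ) :=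
  {L | ∃ B : Multiset G, IsZeroSumSeq G0 B ∧ L = lengthSet G0 B}

/-- The Davenport constant `D(G)`: the maximal length of a minimal zero-sum
sequence over `G`. -/
noncomputable def davenport (G : Type*) [AddCommGroup G] : ℕ :=
  sSup {m | ∃ A : Multiset G, IsMinZeroSum (Set.univ : Set G) A ∧ Multiset.card A = m}

/-- The set of successive distances `Δ(L)` of a set `L ⊆ ℕ`. -/
def deltaOf (L : Set ℕ) : Set ℕ :=
  {d | 0 < d ∧ ∃ a, a ∈ L ∧ a + d ∈ L ∧ ∀ c ∈ L, ¬(a < c ∧ c < a + d)}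

/-- `Δ(G₀) = ⋃_{L ∈ 𝓛(G₀)} Δ(L)`. -/
def deltaG0 (G0 : Set G) : Set ℕ := ⋃ L ∈ systemL G0, deltaOf L

/-- `Δ*(G) = {min Δ(G₀) : G₀ ⊆ G with Δ(G₀) ≠ ∅}`. -/
def deltaStar (G : Type*) [AddCommGroup G] : Set ℕ :=
  {d | ∃ G0 : Set G, deltaG0 G0 ≠ ∅ ∧ d = sInf (deltaG0 G0)}

/-- The elasticity `ρ(L) = max L / min L` of a (finite) set `L ⊆ ℕ`,
with the convention `ρ({0}) = 1`. -/
noncomputable def rhoL (L : Set ℕ) : ℝ :=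
  if sInf L = 0 then 1 else ((sSup L : ℕ) : ℝ) / ((sInf L : ℕ) : ℝ)

/-- The elasticity `ρ(G₀) = sup {ρ(L) : L ∈ 𝓛(G₀)}`. -/
noncomputable def rhoG0 (G0 : Set G) : ℝ := sSup (rhoL '' systemL G0)

/-- `L` (a set of naturals) is an almost arithmetical progression (AAP)
with difference `d`, length `ℓ` and bound `M`:
`L = y + (L' ∪ {0, d, …, ℓd} ∪ L'') ⊆ y + dℤ` with `L' ⊆ [−M, −1]` and
`L'' ⊆ ℓd + [1, M]`. -/
def IsAAP (L : Set ℕ) (d ℓ M : ℕ) : Prop :=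
  ∃ (y : ℤ) (L1 L2 : Set ℤ),
    L1 ⊆ Set.Icc (-(M : ℤ)) (-1) ∧
    L2 ⊆ Set.Icc ((ℓ : ℤ) * d + 1) ((ℓ : ℤ) * d + M) ∧
    ((fun x : ℕ => (x : ℤ)) '' L) =
      (fun x => y + x) '' (L1 ∪ (fun i : ℤ => (d : ℤ) * i) '' Set.Icc (0 : ℤ) (ℓ : ℤ) ∪ L2) ∧
    (∀ x ∈ L, (d : ℤ) ∣ ((x : ℤ) - y))

/-- `Δ₁(G)`: the set of `d ∈ ℕ` such that for every `k` there is some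
`L ∈ 𝓛(G)` which is an AAP with difference `d` and length at least `k`. -/
def delta1 (G : Type*) [AddCommGroup G] : Set ℕ :=
  {d | 0 < d ∧ ∀ k : ℕ, ∃ L ∈ systemL (Set.univ : Set G), ∃ ℓ ≥ k, ∃ M : ℕ, IsAAP L d ℓ M}

/-- `ρ(G, d, k)`: the supremum of elasticities of sets of lengths of `G` which
are AAPs with difference `d` and length at least `k`. -/
noncomputable def rhoGdk (G : Type*) [AddCommGroup G] (d k : ℕ) : ℝ :=
  sSup (rhoL '' {L | L ∈ systemL (Set.univ : Set G) ∧ ∃ ℓ ≥ k, ∃ M : ℕ, IsAAP L d ℓ M})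

/-- `ρ(G, d)`: the limit of the decreasing sequence `(ρ(G, d, k))_k`,
i.e. its infimum. -/
noncomputable def rhoGd (G : Type*) [AddCommGroup G] (d : ℕ) : ℝ :=
  ⨅ k : ℕ, rhoGdk G d k

/-- `ρ*(G, d) = max {ρ(G₀) : G₀ ⊆ G non-half-factorial with d ∣ min Δ(G₀)}`. -/
noncomputable def rhoStar (G : Type*) [AddCommGroup G] (d : ℕ) : ℝ :=
  sSup {x | ∃ G0 : Set G, deltaG0 G0 ≠ ∅ ∧ d ∣ sInf (deltaG0 G0) ∧ x = rhoG0 G0}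

/-- The cross number `k(S) = Σ_{g ∈ S} 1/ord(g)` of a sequence `S`. -/
noncomputable def crossNum (S : Multiset G) : ℝ :=
  (S.map (fun g => (1 : ℝ) / (addOrderOf g))).sum

/-- `K(G₀) = max {k(A) : A ∈ 𝓐(G₀)}`, the cross number of `G₀`. -/
noncomputable def KG0 (G0 : Set G) : ℝ :=
  sSup {x | ∃ A : Multiset G, IsMinZeroSum G0 A ∧ x = crossNum A}

/-- `K(G, d) = max {K(G₀) : G₀ ⊆ G non-half-factorial with d ∣ min Δ(G₀)}`. -/
noncomputable def KGd (G : Type*) [AddCommGroup G] (d : ℕ) : ℝ :=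
  sSup {x | ∃ G0 : Set G, deltaG0 G0 ≠ ∅ ∧ d ∣ sInf (deltaG0 G0) ∧ x = KG0 G0}

/-- `G₀` is an LCN-set: `k(A) ≥ 1` for every atom `A` of `𝓑(G₀)`. -/
def IsLCN (G0 : Set G) : Prop :=
  ∀ A : Multiset G, IsMinZeroSum G0 A → 1 ≤ crossNum A

end Defs

/-! If `min Δ(G₀) ≥ exp(G) - 1`, then `G₀` is an LCN-set: for an atom `A`, the sequence
`A ^ exp(G)` factors both into `exp(G)` copies of `A` and into `exp(G) k(A)` atoms `g ^ ord(g)`,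
so `k(A) < 1` would produce a distance of at most `exp(G) - 2`. For an LCN-set
`max L(B) ≤ k(B) ≤ K(G₀) min L(B)`, hence `ρ(G₀) ≤ K(G₀)`, and the same two factorizations of
`A ^ exp(G)` give `ρ(G₀) ≥ k(A)`. Finally `d ∣ min Δ(G₀)` forces
`min Δ(G₀) ≥ d ≥ n_r - 1 ≥ exp(G) - 1`. -/

lemma Multiset.sum_map_replicate_eq_nsmul {α : Type*} (B : Multiset α) (e : ℕ) :
    (B.map fun g => Multiset.replicate e g).sum = e • B := by
  induction B using Multiset.induction_on with
  | empty => simp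
  | cons a s ih => simp [ih, ← Multiset.singleton_add, smul_add, Multiset.nsmul_singleton]

lemma exists_mem_deltaOf_le_sub {L : Set ℕ} {a b : ℕ} (ha : a ∈ L) (hb : b ∈ L) (hab : a < b) :
    ∃ δ ∈ deltaOf L, δ ≤ b - a := by
  set S := {c ∈ L | a ≤ c ∧ c < b}
  have hc : sSup S ∈ S := Nat.sSup_mem ⟨a, ha, le_rfl, hab⟩ ⟨b, fun c hc => hc.2.2.le⟩
  obtain ⟨hcL, hac, hcb⟩ := hc
  refine ⟨b - sSup S, ⟨by omega, sSup S, hcL, by rwa [Nat.add_sub_cancel' hcb.le], ?_⟩, by omega⟩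
  rintro c hc ⟨hlt, hcb'⟩
  have : c ≤ sSup S := le_csSup ⟨b, fun c hc => hc.2.2.le⟩ ⟨hc, by omega, by omega⟩
  omega

lemma div_le_rhoL {L : Set ℕ} (hL : BddAbove L) (h0 : 0 ∉ L) {a b : ℕ} (ha : a ∈ L) (hb : b ∈ L) :
    (a : ℝ) / b ≤ rhoL L := by
  have hinf : sInf L ≠ 0 := fun h => h0 (h ▸ Nat.sInf_mem ⟨b, hb⟩)
  rw [rhoL, if_neg hinf]
  exact div_le_div₀ (Nat.cast_nonneg _) (by exact_mod_cast le_csSup hL ha)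
    (by exact_mod_cast Nat.pos_of_ne_zero hinf) (by exact_mod_cast Nat.sInf_le hb)

lemma rhoL_le {L : Set ℕ} (hL : BddAbove L) {K : ℝ} (hK : 1 ≤ K)
    (h : ∀ a ∈ L, ∀ b ∈ L, (a : ℝ) ≤ b * K) : rhoL L ≤ K := by
  rw [rhoL]
  split_ifs with hinf
  · exact hK
  · have hne : L.Nonempty := Set.nonempty_iff_ne_empty.mpr fun h => hinf (by simp [h])
    rw [div_le_iff₀ (by exact_mod_cast Nat.pos_of_ne_zero hinf)]
    exact (h _ (Nat.sSup_mem hne hL) _ (Nat.sInf_mem hne)).trans_eq (mul_comm _ _)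

section ZeroSumSequences

variable {G : Type*} [AddCommGroup G] {G0 : Set G}

lemma crossNum_sum {ι : Type*} (s : Finset ι) (U : ι → Multiset G) :
    crossNum (∑ i ∈ s, U i) = ∑ i ∈ s, crossNum (U i) :=
  map_sum (Multiset.sumAddMonoidHom.comp
    (Multiset.mapAddMonoidHom fun g : G => (1 : ℝ) / addOrderOf g)) U s

lemma crossNum_le_card (S : Multiset G) : crossNum S ≤ Multiset.card S := by
  simpa [crossNum] using Multiset.sum_le_card_nsmul (S.map fun g => (1 : ℝ) / addOrderOf g) 1
    (by simp [Nat.cast_inv_le_one])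

lemma card_le_exponent_mul_crossNum [Finite G] (S : Multiset G) :
    (Multiset.card S : ℝ) ≤ AddMonoid.exponent G * crossNum S := by
  have he : (0 : ℝ) < AddMonoid.exponent G := by
    exact_mod_cast Nat.pos_of_ne_zero AddMonoid.exponent_ne_zero_of_finite
  have h := Multiset.card_nsmul_le_sum (s := S.map fun g => (1 : ℝ) / addOrderOf g)
    (a := 1 / AddMonoid.exponent G) <| by
      simp only [Multiset.mem_map, forall_exists_index, and_imp, forall_apply_eq_imp_iff₂]
      intro g _
      gcongr
      · exact_mod_cast addOrderOf_pos g
      · exact AddMonoid.addOrderOf_le_exponent AddMonoid.ExponentExists.of_finite g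
  rw [Multiset.card_map, nsmul_eq_mul, mul_one_div] at h
  exact (div_le_iff₀' he).mp h

lemma card_mem_lengthSet {S : Multiset (Multiset G)} (hS : ∀ U ∈ S, IsMinZeroSum G0 U) :
    Multiset.card S ∈ lengthSet G0 S.sum := by
  obtain ⟨l, rfl⟩ : ∃ l : List (Multiset G), S = l := ⟨S.toList, (Multiset.coe_toList S).symm⟩
  rw [Multiset.coe_card, Multiset.sum_coe]
  exact ⟨fun i => l.get i, fun i => hS _ (by simp), by rw [← List.sum_ofFn, List.ofFn_get]⟩

lemma nsmul_mem_lengthSet {A : Multiset G} (hA : IsMinZeroSum G0 A) (m : ℕ) :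
    m ∈ lengthSet G0 (m • A) :=
  ⟨fun _ => A, fun _ => hA, by simp⟩

lemma le_card_of_mem_lengthSet {B : Multiset G} {k : ℕ} (hk : k ∈ lengthSet G0 B) :
    k ≤ Multiset.card B := by
  obtain ⟨U, hU, rfl⟩ := hk
  rw [Multiset.card_sum]
  calc k = ∑ _i : Fin k, 1 := by simp
    _ ≤ _ := Finset.sum_le_sum fun i _ => Multiset.card_pos.mpr (hU i).1

lemma bddAbove_lengthSet (B : Multiset G) : BddAbove (lengthSet G0 B) :=
  ⟨Multiset.card B, fun _ => le_card_of_mem_lengthSet⟩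

lemma eq_zero_of_zero_mem_lengthSet {B : Multiset G} (h : 0 ∈ lengthSet G0 B) : B = 0 := by
  obtain ⟨U, -, rfl⟩ := h
  simp

lemma le_crossNum_of_mem_lengthSet (hl : IsLCN G0) {B : Multiset G} {k : ℕ}
    (hk : k ∈ lengthSet G0 B) : (k : ℝ) ≤ crossNum B := by
  obtain ⟨U, hU, rfl⟩ := hk
  rw [crossNum_sum]
  simpa using Finset.card_nsmul_le_sum Finset.univ _ 1 fun i _ => hl _ (hU i)

lemma crossNum_le_mul_of_mem_lengthSet {C : ℝ} (hC : ∀ A, IsMinZeroSum G0 A → crossNum A ≤ C)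
    {B : Multiset G} {k : ℕ} (hk : k ∈ lengthSet G0 B) : crossNum B ≤ k * C := by
  obtain ⟨U, hU, rfl⟩ := hk
  rw [crossNum_sum]
  simpa using Finset.sum_le_card_nsmul Finset.univ _ C fun i _ => hC _ (hU i)

lemma isMinZeroSum_replicate_addOrderOf {g : G} (hg : g ∈ G0) (h0 : 0 < addOrderOf g) :
    IsMinZeroSum G0 (Multiset.replicate (addOrderOf g) g) := by
  refine ⟨fun h => h0.ne' (by simpa using congrArg Multiset.card h),
    fun x hx => Multiset.eq_of_mem_replicate hx ▸ hg, by simp, fun T hT hsum => ?_⟩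
  obtain ⟨k, hk, rfl⟩ := Multiset.le_replicate_iff.mp hT
  obtain rfl | hk0 := Nat.eq_zero_or_pos k
  · simp
  · have : addOrderOf g ≤ k :=
      Nat.le_of_dvd hk0 (addOrderOf_dvd_of_nsmul_eq_zero (by simpa using hsum))
    right
    rw [le_antisymm hk this]

lemma exists_mem_lengthSet_nsmul {B : Multiset G} (hB : ∀ g ∈ B, g ∈ G0) {e : ℕ} (he : 0 < e)
    (hord : ∀ g ∈ B, addOrderOf g ∣ e) :
    ∃ t ∈ lengthSet G0 (e • B), (t : ℝ) = e * crossNum B := by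
  have hpos : ∀ g ∈ B, 0 < addOrderOf g := fun g hg => Nat.pos_of_dvd_of_pos (hord g hg) he
  set S := B.bind fun g => Multiset.replicate (e / addOrderOf g)
    (Multiset.replicate (addOrderOf g) g)
  have hsum : S.sum = e • B := by
    rw [Multiset.sum_bind, ← Multiset.sum_map_replicate_eq_nsmul]
    refine congrArg _ (Multiset.map_congr rfl fun g hg => ?_)
    rw [Multiset.sum_replicate, Multiset.nsmul_replicate, Nat.div_mul_cancel (hord g hg)]
  refine ⟨Multiset.card S, hsum ▸ card_mem_lengthSet fun U hU => ?_, ?_⟩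
  · obtain ⟨g, hg, hU⟩ := Multiset.mem_bind.mp hU
    exact Multiset.eq_of_mem_replicate hU ▸ isMinZeroSum_replicate_addOrderOf (hB g hg) (hpos g hg)
  · rw [Multiset.card_bind, crossNum, ← Multiset.sum_map_mul_left, Nat.cast_multiset_sum,
      Multiset.map_map]
    refine congrArg _ (Multiset.map_congr rfl fun g hg => ?_)
    have : (addOrderOf g : ℝ) ≠ 0 := by exact_mod_cast (hpos g hg).ne'
    simp [Nat.cast_div (hord g hg) this, div_eq_mul_inv]

/-- Pigeonhole on the first `|G| + 1` prefix sums of `S`. -/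
lemma Multiset.exists_le_sum_eq_zero [Fintype G] (S : Multiset G) (hS : Fintype.card G ≤ card S) :
    ∃ T ≤ S, T ≠ 0 ∧ card T ≤ Fintype.card G ∧ T.sum = 0 := by
  set l := S.toList
  have key : ∀ i j, i ≤ j → (l.take i).sum + ((l.take j).drop i).sum = (l.take j).sum := by
    intro i j hij
    rw [← List.sum_take_add_sum_drop (l.take j) i, List.take_take, min_eq_left hij]
  obtain ⟨i, j, hlt, hj, hsum⟩ : ∃ i j, i < j ∧ j ≤ Fintype.card G ∧
      ((l.take j).drop i).sum = 0 := by
    obtain ⟨i, j, hij, heq⟩ := Fintype.exists_ne_map_eq_of_card_lt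
      (fun i : Fin (Fintype.card G + 1) => (l.take i).sum) (by simp)
    rcases Fin.lt_or_lt_of_ne hij with h | h
    · exact ⟨i, j, h, Nat.lt_succ_iff.mp j.2, by simpa [heq] using key i j h.le⟩
    · exact ⟨j, i, h, Nat.lt_succ_iff.mp i.2, by simpa [heq] using key j i h.le⟩
  have hlen : ((l.take j).drop i).length = j - i := by simp [l]; omega
  refine ⟨(l.take j).drop i, ?_, ?_, ?_, by simpa using hsum⟩
  · conv_rhs => rw [← Multiset.coe_toList S]
    exact Multiset.coe_le.mpr ((List.drop_sublist _ _).trans (List.take_sublist _ _)).subperm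
  · simp only [ne_eq, Multiset.coe_eq_zero, ← List.length_eq_zero_iff, hlen]
    omega
  · simp only [Multiset.coe_card, hlen]
    omega

lemma card_le_of_isMinZeroSum [Fintype G] {A : Multiset G} (hA : IsMinZeroSum G0 A) :
    Multiset.card A ≤ Fintype.card G := by
  by_contra! hcard
  obtain ⟨T, hle, hT0, hT, hsum⟩ := A.exists_le_sum_eq_zero hcard.le
  obtain rfl := (hA.2.2.2 T hle hsum).resolve_left hT0
  omega

lemma pos_of_mem_deltaG0 {δ : ℕ} (h : δ ∈ deltaG0 G0) : 0 < δ := by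
  simp only [deltaG0, Set.mem_iUnion] at h
  obtain ⟨_, _, hδ⟩ := h
  exact hδ.1

lemma exists_isMinZeroSum_of_deltaG0_ne_empty (h : deltaG0 G0 ≠ ∅) :
    ∃ A, IsMinZeroSum G0 A := by
  obtain ⟨δ, hδ⟩ := Set.nonempty_iff_ne_empty.mpr h
  simp only [deltaG0, Set.mem_iUnion] at hδ
  obtain ⟨_, ⟨B, -, rfl⟩, hpos, a, -, ⟨U, hU, -⟩, -⟩ := hδ
  exact ⟨U ⟨0, by omega⟩, hU _⟩

lemma lengthSet_mem_systemL_nsmul {A : Multiset G} (hA : IsMinZeroSum G0 A) (m : ℕ) :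
    lengthSet G0 (m • A) ∈ systemL G0 :=
  ⟨m • A, ⟨fun g hg => hA.2.1 g (Multiset.mem_of_mem_nsmul hg),
    by rw [Multiset.sum_nsmul, hA.2.2.1, smul_zero]⟩, rfl⟩

lemma isLCN_of_exponent_sub_one_le [Fintype G]
    (h : AddMonoid.exponent G - 1 ≤ sInf (deltaG0 G0)) : IsLCN G0 := by
  intro A hA
  by_contra! hlt
  set e := AddMonoid.exponent G
  have he : 0 < e := Nat.pos_of_ne_zero AddMonoid.exponent_ne_zero_of_finite
  obtain ⟨t, ht, htk⟩ := exists_mem_lengthSet_nsmul hA.2.1 he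
    fun g _ => AddMonoid.addOrder_dvd_exponent g
  have hte : t < e := by
    have : (t : ℝ) < e := by rw [htk]; nlinarith [(Nat.cast_pos (α := ℝ)).mpr he]
    exact_mod_cast this
  have hcard : 2 ≤ Multiset.card A := by
    by_contra! hcard
    obtain ⟨g, rfl⟩ := Multiset.card_eq_one.mp
      (le_antisymm (Nat.lt_succ_iff.mp hcard) (Multiset.card_pos.mpr hA.1))
    obtain rfl : g = 0 := by simpa using hA.2.2.1
    simp [crossNum] at hlt
  have ht2 : 2 ≤ t := by
    have : (Multiset.card A : ℝ) ≤ t := htk ▸ card_le_exponent_mul_crossNum A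
    exact_mod_cast (Nat.cast_le.mpr hcard).trans this
  obtain ⟨δ, hδ, hδt⟩ := exists_mem_deltaOf_le_sub ht (nsmul_mem_lengthSet hA e) hte
  have : sInf (deltaG0 G0) ≤ δ :=
    Nat.sInf_le (Set.mem_biUnion (lengthSet_mem_systemL_nsmul hA e) hδ)
  omega

lemma bddAbove_crossNum_isMinZeroSum [Fintype G] (G0 : Set G) :
    BddAbove {x | ∃ A, IsMinZeroSum G0 A ∧ x = crossNum A} := by
  refine ⟨Fintype.card G, ?_⟩
  rintro _ ⟨A, hA, rfl⟩
  exact (crossNum_le_card A).trans (by exact_mod_cast card_le_of_isMinZeroSum hA)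

lemma crossNum_le_KG0 [Fintype G] {A : Multiset G} (hA : IsMinZeroSum G0 A) :
    crossNum A ≤ KG0 G0 :=
  le_csSup (bddAbove_crossNum_isMinZeroSum G0) ⟨A, hA, rfl⟩

lemma crossNum_le_rhoL_lengthSet_nsmul [Fintype G] {A : Multiset G} (hA : IsMinZeroSum G0 A) :
    crossNum A ≤ rhoL (lengthSet G0 (AddMonoid.exponent G • A)) := by
  set e := AddMonoid.exponent G
  have he : 0 < e := Nat.pos_of_ne_zero AddMonoid.exponent_ne_zero_of_finite
  obtain ⟨t, ht, htk⟩ := exists_mem_lengthSet_nsmul hA.2.1 he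
    fun g _ => AddMonoid.addOrder_dvd_exponent g
  have h0 : 0 ∉ lengthSet G0 (e • A) := fun h => by
    simpa [he.ne', hA.1] using congrArg Multiset.card (eq_zero_of_zero_mem_lengthSet h)
  calc crossNum A = (t : ℝ) / e := by rw [htk]; field_simp
    _ ≤ _ := div_le_rhoL (bddAbove_lengthSet _) h0 ht (nsmul_mem_lengthSet hA e)

lemma rhoG0_eq_KG0_of_isLCN [Fintype G] (hl : IsLCN G0) {A : Multiset G}
    (hA : IsMinZeroSum G0 A) : rhoG0 G0 = KG0 G0 := by
  have hK : 1 ≤ KG0 G0 := (hl A hA).trans (crossNum_le_KG0 hA)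
  have hρK : ∀ L ∈ systemL G0, rhoL L ≤ KG0 G0 := by
    rintro _ ⟨B, -, rfl⟩
    exact rhoL_le (bddAbove_lengthSet B) hK fun a ha b hb =>
      (le_crossNum_of_mem_lengthSet hl ha).trans
        (crossNum_le_mul_of_mem_lengthSet (fun _ => crossNum_le_KG0) hb)
  refine le_antisymm
    (csSup_le ((Set.nonempty_of_mem (lengthSet_mem_systemL_nsmul hA 0)).image rhoL) ?_)
    (csSup_le ⟨_, A, hA, rfl⟩ ?_)
  · rintro _ ⟨L, hL, rfl⟩
    exact hρK L hL
  · rintro _ ⟨A', hA', rfl⟩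
    exact (crossNum_le_rhoL_lengthSet_nsmul hA').trans <|
      le_csSup ⟨KG0 G0, Set.forall_mem_image.mpr hρK⟩ ⟨_, lengthSet_mem_systemL_nsmul hA' _, rfl⟩

theorem rhoG0_eq_KG0 [Fintype G] (hne : deltaG0 G0 ≠ ∅)
    (h : AddMonoid.exponent G - 1 ≤ sInf (deltaG0 G0)) : rhoG0 G0 = KG0 G0 :=
  have ⟨_, hA⟩ := exists_isMinZeroSum_of_deltaG0_ne_empty hne
  rhoG0_eq_KG0_of_isLCN (isLCN_of_exponent_sub_one_le h) hA

end ZeroSumSequences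

lemma AddMonoid.exponent_le_of_addEquiv_pi {G ι : Type*} [AddMonoid G] {n : ι → ℕ}
    (φ : G ≃+ ∀ i, ZMod (n i)) {m : ℕ} (hm : 0 < m) (hdvd : ∀ i, n i ∣ m) :
    AddMonoid.exponent G ≤ m :=
  AddMonoid.exponent_min' m hm fun g => φ.injective <| funext fun i => by
    simp [nsmul_eq_mul, (ZMod.natCast_eq_zero_iff m (n i)).mpr (hdvd i)]

/-- If `G ≅ C_{n₁} ⊕ … ⊕ C_{n_r}` with `1 < n₁ ∣ … ∣ n_r`,
`D(G) ≥ 4`, `d ∈ Δ₁(G)`, `d ≥ max {⌊n_r/2⌋, ⌊(r+1)/2⌋}` and `d ≥ n_r − 1`,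
then `ρ*(G, d) = K(G, d)`. -/
theorem stmt8 {G : Type*} [AddCommGroup G] [Fintype G]
    (r : ℕ) (hr : 0 < r) (n : Fin r → ℕ) (hn : ∀ i, 1 < n i)
    (hdvd : ∀ i j : Fin r, i ≤ j → n i ∣ n j)
    (hG : Nonempty (G ≃+ (∀ i : Fin r, ZMod (n i))))
    (d : ℕ) (hd2 : n ⟨r - 1, by omega⟩ - 1 ≤ d) :
    rhoStar G d = KGd G d := by
  obtain ⟨φ⟩ := hG
  have hexp : AddMonoid.exponent G ≤ n ⟨r - 1, by omega⟩ :=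
    AddMonoid.exponent_le_of_addEquiv_pi φ (Nat.zero_lt_of_lt (hn _))
      fun i => hdvd i _ (Fin.le_def.mpr (Nat.le_sub_one_of_lt i.isLt))
  have key : ∀ G0 : Set G, deltaG0 G0 ≠ ∅ → d ∣ sInf (deltaG0 G0) → rhoG0 G0 = KG0 G0 :=
    fun G0 hne hdiv =>
      have hd_le : d ≤ sInf (deltaG0 G0) := Nat.le_of_dvd
        (pos_of_mem_deltaG0 (Nat.sInf_mem (Set.nonempty_iff_ne_empty.mpr hne))) hdiv
      rhoG0_eq_KG0 hne (by omega)
  simp only [rhoStar, KGd]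
  congr 1
  ext x
  refine exists_congr fun G0 => ⟨?_, ?_⟩ <;> rintro ⟨hne, hd, rfl⟩
  exacts [⟨hne, hd, key G0 hne hd⟩, ⟨hne, hd, (key G0 hne hd).symm⟩]
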